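/- For every integer i ≥ 0, the polynomial identity e_i = Σ_{j=0}^{i} s_{i,j} · R_j holds in F[z], where s_{i,j} = (−1)^{i+j} [i+1+j]! / ([i−j]! [2j+1]!). -/

import Mathlib

open Finset

noncomputable section

/-- The field `F = ℚ(𝔮)` of rational functions over `ℚ` in an indeterminate `𝔮`. -/
abbrev F : Type := RatFunc ℚ

/-- The indeterminate `𝔮`. -/
noncomputable def qv : F := RatFunc.X

/-- `{n} = 𝔮^n - 𝔮^{-n}` for `n : ℤ`. -/
def brc (n : ℤ) : F := qv ^ n - qv ^ (-n)

/-- `[n] = {n}/{1}`. -/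
def brk (n : ℤ) : F := brc n / brc 1

/-- `{n}! = ∏_{j=1}^n {j}`. -/
def brcFac (n : ℕ) : F := ∏ j ∈ Finset.range n, brc ((j : ℤ) + 1)

/-- `[n]! = ∏_{j=1}^n [j]`. -/
def brkFac (n : ℕ) : F := ∏ j ∈ Finset.range n, brk ((j : ℤ) + 1)

/-- `q = 𝔮²`. -/
def qq : F := qv ^ 2

/-- The q-Pochhammer symbol `(x; q)_k = ∏_{j=0}^{k-1} (1 - x q^j)`. -/
def poch (x : F) (k : ℕ) : F := ∏ j ∈ Finset.range k, (1 - x * qq ^ j)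

/-- The q-binomial coefficient `[n choose i]_q`. -/
def qbinom (n i : ℕ) : F := poch qq n / (poch qq i * poch qq (n - i))

/-- The Chebyshev-like basis `e_i` of `F[z]`: `e_0 = 1`, `e_1 = z`, `e_i = z e_{i-1} - e_{i-2}`. -/
noncomputable def e : ℕ → Polynomial F
  | 0 => 1
  | 1 => Polynomial.X
  | (i + 2) => Polynomial.X * e (i + 1) - e i

/-- `λ_i = -𝔮^{i+1} - 𝔮^{-i-1}`. -/
def lam (i : ℤ) : F := -qv ^ (i + 1) - qv ^ (-(i + 1))

/-- `R_n = ∏_{i=0}^{n-1} (z - λ_{2i})`. -/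
noncomputable def R (n : ℕ) : Polynomial F :=
  ∏ i ∈ Finset.range n, (Polynomial.X - Polynomial.C (lam (2 * (i : ℤ))))

/-- `s_{i,j} = (-1)^{i+j} [i+1+j]! / ([i-j]! [2j+1]!)` for `0 ≤ j ≤ i`. -/
def scoef (i j : ℕ) : F :=
  (-1) ^ (i + j) * brkFac (i + 1 + j) / (brkFac (i - j) * brkFac (2 * j + 1))

open Polynomial

/-!
Both sides satisfy the three-term recurrence of `e`. Since `z R_j = R_{j+1} + λ_{2j} R_j`, the
coefficients of `z e_{i+1} - e_i` in the basis `R_j` are `s_{i+1,j-1} + λ_{2j} s_{i+1,j} - s_{i,j}`,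
so it suffices that `s_{i,j}`, extended by zero to `j > i`, satisfies this recurrence. Comparing
neighbouring coefficients through the ratios `s_{i+1,j} / s_{i,j}` and `s_{i,j+1} / s_{i,j}`, the
generic case becomes the q-integer identity
`[a+b+2][a+b+1] + [b+1][b] = [a+1][a] - λ_a [a+b+1][b+1]`,
and the boundary cases reduce to `λ_a = [a] - [a+2]` and `[2][n+1] = [n+2] + [n]`.
-/

lemma qv_ne_zero : qv ≠ 0 := RatFunc.X_ne_zero

lemma qv_pow_ne_one {n : ℕ} (hn : n ≠ 0) : qv ^ n ≠ 1 := by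
  intro h
  have := congrArg RatFunc.intDegree h
  rw [qv, ← RatFunc.algebraMap_X, ← map_pow, RatFunc.intDegree_polynomial,
    RatFunc.intDegree_one, natDegree_X_pow] at this
  exact hn (by exact_mod_cast this)

lemma qv_zpow_ne_one {n : ℤ} (hn : n ≠ 0) : qv ^ n ≠ 1 := by
  obtain ⟨k, rfl | rfl⟩ := Int.eq_nat_or_neg n
  · exact_mod_cast qv_pow_ne_one (by omega)
  · simpa using qv_pow_ne_one (n := k) (by omega)

lemma brc_ne_zero {n : ℤ} (hn : n ≠ 0) : brc n ≠ 0 := by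
  rw [brc, sub_ne_zero, Ne, ← div_eq_one_iff_eq (zpow_ne_zero _ qv_ne_zero),
    ← zpow_sub₀ qv_ne_zero]
  exact qv_zpow_ne_one (by omega)

lemma brk_ne_zero {n : ℤ} (hn : n ≠ 0) : brk n ≠ 0 :=
  div_ne_zero (brc_ne_zero hn) (brc_ne_zero one_ne_zero)

lemma brk_zero : brk 0 = 0 := by simp [brk, brc]

lemma brk_one : brk 1 = 1 := div_self (brc_ne_zero one_ne_zero)

lemma lam_eq_brk_sub_brk (a : ℤ) : lam a = brk a - brk (a + 2) := by
  have h : lam a * brc 1 = brc a - brc (a + 2) := by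
    have hq := qv_ne_zero
    have ha := zpow_ne_zero a qv_ne_zero
    simp only [lam, brc, zpow_add₀ qv_ne_zero, zpow_neg, zpow_one, neg_add]
    field_simp
    ring
  rw [brk, brk, ← sub_div, eq_div_iff (brc_ne_zero one_ne_zero), h]

lemma brk_two_mul (n : ℤ) : brk 2 * brk (n + 1) = brk (n + 2) + brk n := by
  have h : brc 2 * brc (n + 1) = (brc (n + 2) + brc n) * brc 1 := by
    have hq := qv_ne_zero
    have hn := zpow_ne_zero n qv_ne_zero
    simp only [brc, zpow_add₀ qv_ne_zero, zpow_neg, zpow_one]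
    field_simp
    ring
  simp only [brk]
  field_simp [brc_ne_zero one_ne_zero]
  linear_combination h

lemma brk_add_two_mul_brk_add_one (a b : ℤ) :
    brk (a + b + 2) * brk (a + b + 1) + brk (b + 1) * brk b =
      brk (a + 1) * brk a - lam a * brk (a + b + 1) * brk (b + 1) := by
  have h : brc (a + b + 2) * brc (a + b + 1) + brc (b + 1) * brc b =
      brc (a + 1) * brc a - lam a * brc (a + b + 1) * brc (b + 1) := by
    have hq := qv_ne_zero
    have ha := zpow_ne_zero a qv_ne_zero
    have hb := zpow_ne_zero b qv_ne_zero
    simp only [lam, brc, zpow_add₀ qv_ne_zero, zpow_neg, zpow_one, neg_add]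
    field_simp
    ring
  simp only [brk]
  field_simp [brc_ne_zero one_ne_zero]
  linear_combination h

lemma brkFac_succ (n : ℕ) : brkFac (n + 1) = brkFac n * brk ((n : ℤ) + 1) :=
  prod_range_succ _ n

lemma brkFac_zero : brkFac 0 = 1 := prod_range_zero _

lemma brkFac_ne_zero (n : ℕ) : brkFac n ≠ 0 :=
  prod_ne_zero_iff.2 fun _ _ => brk_ne_zero (by omega)

lemma scoef_self (i : ℕ) : scoef i i = 1 := by
  rw [scoef, Nat.sub_self, ← two_mul, show i + 1 + i = 2 * i + 1 by ring,
    Even.neg_one_pow (even_two_mul i), one_mul, brkFac_zero, one_mul,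
    div_self (brkFac_ne_zero _)]

lemma brk_mul_scoef_succ_left (j d : ℕ) :
    brk ((d : ℤ) + 1) * scoef (j + d + 1) j = -brk (2 * j + d + 2) * scoef (j + d) j := by
  rw [scoef, scoef, show j + d + 1 - j = d + 1 by omega, show j + d - j = d by omega,
    show j + d + 1 + 1 + j = (j + d + 1 + j) + 1 by ring, brkFac_succ (j + d + 1 + j),
    brkFac_succ d, show j + d + 1 + j = (j + d + j) + 1 by ring, pow_succ]
  have := brk_ne_zero (n := (d : ℤ) + 1) (by omega)
  have := brkFac_ne_zero d
  have := brkFac_ne_zero (2 * j + 1)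
  push_cast at *
  ring_nf at *
  field_simp

lemma brk_mul_scoef_succ_right (j d : ℕ) :
    brk (2 * j + 2) * brk (2 * j + 3) * scoef (j + d + 1) (j + 1) =
      -brk (2 * j + d + 3) * brk (d + 1) * scoef (j + d + 1) j := by
  rw [scoef, scoef, show j + d + 1 - (j + 1) = d by omega, show j + d + 1 - j = d + 1 by omega,
    show j + d + 1 + 1 + (j + 1) = (j + d + 1 + 1 + j) + 1 by ring,
    show 2 * (j + 1) + 1 = (2 * j + 1 + 1) + 1 by ring, brkFac_succ (j + d + 1 + 1 + j),
    brkFac_succ d, brkFac_succ (2 * j + 1 + 1), brkFac_succ (2 * j + 1),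
    show j + d + 1 + (j + 1) = (j + d + 1 + j) + 1 by ring, pow_succ]
  have := brk_ne_zero (n := (d : ℤ) + 1) (by omega)
  have := brk_ne_zero (n := ((2 * j + 1 : ℕ) : ℤ) + 1) (by omega)
  have := brk_ne_zero (n := ((2 * j + 1 + 1 : ℕ) : ℤ) + 1) (by omega)
  have := brkFac_ne_zero d
  have := brkFac_ne_zero (2 * j + 1)
  push_cast at *
  ring_nf at *
  field_simp

lemma scoef_succ_self (i : ℕ) : scoef (i + 1) i = -brk (2 * i + 2) := by
  simpa [brk_one, scoef_self] using brk_mul_scoef_succ_left i 0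

lemma scoef_add_two_zero (d : ℕ) : scoef (d + 2) 0 = lam 0 * scoef (d + 1) 0 - scoef d 0 := by
  have h₁ := brk_mul_scoef_succ_left 0 (d + 1)
  have h₀ := brk_mul_scoef_succ_left 0 d
  have h₂ := brk_two_mul ((d : ℤ) + 1)
  have hlam : lam 0 = -brk 2 := by simp [lam_eq_brk_sub_brk, brk_zero]
  push_cast at *
  apply mul_left_cancel₀ (brk_ne_zero (n := (d : ℤ) + 2) (by omega))
  rw [hlam]
  linear_combination (norm := ring_nf) h₁ + h₀ + scoef (d + 1) 0 * h₂

lemma scoef_add_two_succ (j d : ℕ) :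
    scoef (j + 1 + d + 2) (j + 1) = scoef (j + 1 + d + 1) j
      + lam (2 * j + 2) * scoef (j + 1 + d + 1) (j + 1) - scoef (j + 1 + d) (j + 1) := by
  have h₁ := brk_mul_scoef_succ_left (j + 1) d
  have h₂ := brk_mul_scoef_succ_left (j + 1) (d + 1)
  have h₃ := brk_mul_scoef_succ_right j (d + 1)
  have key := brk_add_two_mul_brk_add_one (2 * j + 2) (d + 1)
  push_cast at *
  apply mul_left_cancel₀ (mul_ne_zero (brk_ne_zero (n := (d : ℤ) + 2) (by omega))
    (brk_ne_zero (n := 2 * (j : ℤ) + d + 4) (by omega)))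
  linear_combination (norm := ring_nf) brk (2 * j + d + 4) * h₂ - h₃
    + brk (d + 2) * h₁ - scoef (j + 1 + d + 1) (j + 1) * key

-- `scoef i j` is not `0` for `j > i`, where `i - j` truncates to `0`.
def scoefTrunc (i j : ℕ) : F := if j ≤ i then scoef i j else 0

lemma scoefTrunc_add_two_zero (i : ℕ) :
    scoefTrunc (i + 2) 0 = lam 0 * scoefTrunc (i + 1) 0 - scoefTrunc i 0 := by
  simpa [scoefTrunc] using scoef_add_two_zero i

lemma scoefTrunc_add_two_succ (i j : ℕ) :
    scoefTrunc (i + 2) (j + 1) = scoefTrunc (i + 1) j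
      + lam (2 * j + 2) * scoefTrunc (i + 1) (j + 1) - scoefTrunc i (j + 1) := by
  obtain h | rfl | rfl | h : j + 1 ≤ i ∨ j = i ∨ j = i + 1 ∨ i + 1 < j := by omega
  · obtain ⟨d, rfl⟩ := Nat.exists_eq_add_of_le h
    simpa [scoefTrunc, show j + 1 ≤ j + 1 + d + 1 by omega, show j ≤ j + 1 + d + 1 by omega,
      show j + 1 ≤ j + 1 + d + 2 by omega] using scoef_add_two_succ j d
  · simp [scoefTrunc, scoef_succ_self, scoef_self, lam_eq_brk_sub_brk]
    ring_nf
  · simp [scoefTrunc, scoef_self]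
  · simp [scoefTrunc, show ¬ j + 1 ≤ i + 2 by omega, show ¬ j ≤ i + 1 by omega,
      show ¬ j + 1 ≤ i + 1 by omega, show ¬ j + 1 ≤ i by omega]

lemma sum_range_scoefTrunc {i N : ℕ} (h : i + 1 ≤ N) :
    ∑ j ∈ range N, C (scoefTrunc i j) * R j = ∑ j ∈ range (i + 1), C (scoefTrunc i j) * R j := by
  refine (sum_subset (range_subset_range.2 h) fun j _ hj => ?_).symm
  simp [scoefTrunc, show ¬ j ≤ i by simpa using hj]

lemma X_mul_R (j : ℕ) : X * R j = R (j + 1) + C (lam (2 * j)) * R j := by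
  rw [R, R, prod_range_succ]
  ring

lemma sum_C_mul_R_recurrence (a b c : ℕ → F) (n : ℕ) (hb : b (n + 1) = 0)
    (hc₀ : c 0 = lam 0 * b 0 - a 0)
    (hc : ∀ j, c (j + 1) = b j + lam (2 * j + 2) * b (j + 1) - a (j + 1)) :
    ∑ j ∈ range (n + 2), C (c j) * R j =
      X * ∑ j ∈ range (n + 1), C (b j) * R j - ∑ j ∈ range (n + 2), C (a j) * R j := by
  have hX : X * ∑ j ∈ range (n + 1), C (b j) * R j = ∑ j ∈ range (n + 1), C (b j) * R (j + 1)
      + ∑ j ∈ range (n + 2), C (lam (2 * j) * b j) * R j := by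
    rw [sum_range_succ _ (n + 1), hb, mul_zero, map_zero, zero_mul, add_zero, mul_sum,
      ← sum_add_distrib]
    refine sum_congr rfl fun j _ => ?_
    rw [mul_left_comm, X_mul_R, map_mul]
    ring
  rw [hX, sum_range_succ' (fun j => C (c j) * R j), sum_range_succ' (fun j => C (a j) * R j),
    sum_range_succ' (fun j => C (lam (2 * j) * b j) * R j)]
  simp only [hc, hc₀, map_add, map_sub, map_mul, add_mul, sub_mul, sum_add_distrib,
    sum_sub_distrib]
  push_cast [mul_add_one]
  ring

lemma e_add_two (n : ℕ) : e (n + 2) = X * e (n + 1) - e n := rfl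

lemma e_eq_sum_scoefTrunc (i : ℕ) : e i = ∑ j ∈ range (i + 1), C (scoefTrunc i j) * R j := by
  induction i using Nat.twoStepInduction with
  | zero => simp [e, scoefTrunc, scoef_self, R]
  | one =>
    simp [e, sum_range_succ, scoefTrunc, scoef_self, scoef_succ_self, R, lam_eq_brk_sub_brk,
      brk_zero]
  | more n ih ih₁ =>
    rw [e_add_two, ih, ih₁, ← sum_range_scoefTrunc (i := n) (N := n + 3) (by omega)]
    exact (sum_C_mul_R_recurrence _ _ _ (n + 1) (by simp [scoefTrunc])
      (scoefTrunc_add_two_zero n) (scoefTrunc_add_two_succ n)).symm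

/-- For every `i ≥ 0`, `e_i = Σ_{j=0}^i s_{i,j} R_j` in `F[z]`. -/
theorem stmt1 (i : ℕ) :
    e i = ∑ j ∈ Finset.range (i + 1), Polynomial.C (scoef i j) * R j := by
  rw [e_eq_sum_scoefTrunc]
  refine sum_congr rfl fun j hj => ?_
  rw [scoefTrunc, if_pos (Nat.lt_succ_iff.1 (mem_range.1 hj))]
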